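/- arXiv:1207.4412 — 5 statements merged into one kernel-verified Lean document; each statement's English description precedes it below -/
import Mathlib

section
/- Let x = i₀ + γ with i₀ ∈ ℤ and γ ∈ (-1/2, 1/2]. Then the symmetric partial sums ∑_{i=-n, i≠i₀}^{n} 1/(x-i) converge as n → ∞ to -2γ ∑_{i=1}^{∞} 1/(i² - γ²). -/
/-!
Substituting `k = i₀ - i` turns the partial sum into the sum of `1 / (γ + k)` over the window
`[i₀ - n, i₀ + n]` with `k = 0` removed. Moving the centre of a window by one changes its sum by
two terms that tend to `0`, so the window may be recentred at `0`. In a symmetric window the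
terms `k` and `-k` pair up to `-2γ / (k² - γ²)`.
-/

open Filter Finset Topology

section IntervalSums

variable {M : Type*}

section AddCommMonoid

variable [AddCommMonoid M]

lemma sum_Icc_neg_natCast (f : ℤ → M) (n : ℕ) :
    ∑ k ∈ Icc (-n : ℤ) n, f k = f 0 + ∑ j ∈ range n, (f (j + 1) + f (-(j + 1))) := by
  induction n with
  | zero => simp
  | succ n ih =>
    have h : Icc (-(n + 1 : ℕ) : ℤ) (n + 1 : ℕ)
        = insert ((n : ℤ) + 1) (insert (-((n : ℤ) + 1)) (Icc (-n : ℤ) n)) := by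
      ext k; simp only [mem_insert, mem_Icc]; omega
    rw [h, sum_insert (by simp; omega), sum_insert (by simp), ih, sum_range_succ]
    abel

lemma sum_erase_Icc_comp_sub (f : ℤ → M) (c : ℤ) (n : ℕ) :
    ∑ i ∈ (Icc (-n : ℤ) n).erase c, f (c - i) = ∑ k ∈ (Icc (c - n) (c + n)).erase 0, f k := by
  refine sum_nbij' (c - ·) (c - ·) ?_ ?_ (fun _ _ => sub_sub_cancel c _)
    (fun _ _ => sub_sub_cancel c _) fun _ _ => rfl <;>
  · intro i hi
    simp only [mem_erase, mem_Icc] at hi ⊢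
    omega

end AddCommMonoid

variable [AddCommGroup M]

lemma sum_Icc_add_one_sub_sum_Icc (f : ℤ → M) (c : ℤ) (n : ℕ) :
    ∑ k ∈ Icc (c + 1 - n) (c + 1 + n), f k - ∑ k ∈ Icc (c - n) (c + n), f k
      = f (c + 1 + n) - f (c - n) := by
  have h₁ : insert (c - n) (Icc (c + 1 - n) (c + 1 + n)) = Icc (c - n) (c + 1 + n) := by
    ext k; simp only [mem_insert, mem_Icc]; omega
  have h₂ : insert (c + 1 + n) (Icc (c - n) (c + n)) = Icc (c - n) (c + 1 + n) := by
    ext k; simp only [mem_insert, mem_Icc]; omega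
  rw [sub_eq_sub_iff_add_eq_add, add_comm, ← sum_insert (by simp), h₁, ← h₂,
    sum_insert (by simp)]

variable [TopologicalSpace M] [IsTopologicalAddGroup M]

theorem tendsto_sum_Icc_shift_sub_sum_Icc (f : ℤ → M) (hf : Tendsto f cofinite (𝓝 0)) (c : ℤ) :
    Tendsto (fun n : ℕ => ∑ k ∈ Icc (c - n) (c + n), f k - ∑ k ∈ Icc (-n : ℤ) n, f k)
      atTop (𝓝 0) := by
  rw [Int.cofinite_eq, tendsto_sup] at hf
  have hstep (b : ℤ) : Tendsto (fun n : ℕ => f (b + 1 + n) - f (b - n)) atTop (𝓝 0) := by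
    have htop := tendsto_atTop_add_const_left _ (b + 1) tendsto_natCast_atTop_atTop
    have hbot := tendsto_atBot_add_const_left _ b
      (tendsto_neg_atTop_atBot.comp tendsto_natCast_atTop_atTop)
    simpa [sub_eq_add_neg] using (hf.2.comp htop).sub (hf.1.comp hbot)
  induction c using Int.induction_on with
  | zero => simpa using tendsto_const_nhds
  | succ b ih =>
    have h := (hstep b).add ih
    rw [add_zero] at h
    refine h.congr fun n => ?_
    rw [← sum_Icc_add_one_sub_sum_Icc]; abel
  | pred b ih =>
    have h := ih.sub (hstep (-b - 1))
    rw [sub_zero] at h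
    refine h.congr fun n => ?_
    have := sum_Icc_add_one_sub_sum_Icc f (-b - 1) n
    rw [sub_add_cancel] at this ⊢
    rw [← this]; abel

end IntervalSums

lemma tendsto_one_div_add_intCast_cofinite (γ : ℝ) :
    Tendsto (fun k : ℤ => 1 / (γ + k)) cofinite (𝓝 0) := by
  have h := (tendsto_const_add_cobounded γ).comp
    (Int.cofinite_eq ▸ tendsto_intCast_atBot_sup_atTop_cobounded (α := ℝ))
  simpa only [one_div, Function.comp_def] using tendsto_inv₀_cobounded.comp h

lemma one_div_add_add_one_div_sub {γ t : ℝ} (h₁ : γ + t ≠ 0) (h₂ : γ - t ≠ 0) :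
    1 / (γ + t) + 1 / (γ - t) = -2 * γ * (1 / (t ^ 2 - γ ^ 2)) := by
  have h : t ^ 2 - γ ^ 2 ≠ 0 := by
    rw [show t ^ 2 - γ ^ 2 = -((γ + t) * (γ - t)) by ring]
    exact neg_ne_zero.2 (mul_ne_zero h₁ h₂)
  field_simp
  ring

lemma summable_one_div_add_one_sq_sub_sq {γ : ℝ} (hγ : |γ| < 1) :
    Summable fun i : ℕ => 1 / (((i : ℝ) + 1) ^ 2 - γ ^ 2) := by
  have hγ2 : γ ^ 2 < 1 := by simpa using sq_lt_one_iff_abs_lt_one γ |>.2 hγ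
  have hinv : Summable fun i : ℕ => 1 / ((i : ℝ) + 1) ^ 2 := by
    simpa using (summable_nat_add_iff 1).2 (Real.summable_one_div_nat_pow.2 one_lt_two)
  have hi (i : ℕ) : (1 : ℝ) ≤ ((i : ℝ) + 1) ^ 2 := by
    nlinarith [(i.cast_nonneg : (0 : ℝ) ≤ i)]
  refine (hinv.mul_left (1 - γ ^ 2)⁻¹).of_nonneg_of_le
    (fun i => one_div_nonneg.2 (by linarith [hi i])) fun i => ?_
  rw [← div_eq_inv_mul, div_div, one_div_le_one_div (by linarith [hi i]) (by nlinarith [hi i])]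
  nlinarith [hi i]

lemma sum_Icc_erase_zero_one_div_add {γ : ℝ} (hγ : |γ| < 1) (n : ℕ) :
    ∑ k ∈ (Icc (-n : ℤ) n).erase 0, 1 / (γ + k)
      = -2 * γ * ∑ i ∈ range n, 1 / (((i : ℝ) + 1) ^ 2 - γ ^ 2) := by
  rw [sum_erase_eq_sub (by simp), sum_Icc_neg_natCast, add_sub_cancel_left, mul_sum]
  refine sum_congr rfl fun j _ => ?_
  have hj : (1 : ℝ) ≤ j + 1 := by simp
  rw [abs_lt] at hγ
  push_cast
  rw [← sub_eq_add_neg]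
  exact one_div_add_add_one_div_sub (by linarith) (by linarith)

theorem claim1_first_sum (x : ℝ) (i₀ : ℤ) (γ : ℝ)
    (hx : x = i₀ + γ) (hγ : γ ∈ Set.Ioc (-(1:ℝ)/2) (1/2)) :
    Tendsto (fun n : ℕ => ∑ i ∈ (Finset.Icc (-(n:ℤ)) (n:ℤ)).erase i₀, 1 / (x - i))
      atTop (nhds (-2 * γ * ∑' i : ℕ, 1 / (((i:ℝ) + 1) ^ 2 - γ ^ 2))) := by
  have hγ' : |γ| < 1 := abs_lt.2 ⟨by linarith [hγ.1], by linarith [hγ.2]⟩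
  set g : ℤ → ℝ := fun k => 1 / (γ + k)
  have hsym : Tendsto (fun n : ℕ => ∑ k ∈ (Icc (-n : ℤ) n).erase 0, g k) atTop
      (𝓝 (-2 * γ * ∑' i : ℕ, 1 / (((i : ℝ) + 1) ^ 2 - γ ^ 2))) := by
    simp only [g, sum_Icc_erase_zero_one_div_add hγ']
    exact (summable_one_div_add_one_sq_sub_sq hγ').hasSum.tendsto_sum_nat.const_mul _
  have hshift := tendsto_sum_Icc_shift_sub_sum_Icc g (tendsto_one_div_add_intCast_cofinite γ) i₀
  rw [← zero_add (-2 * γ * _)]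
  refine (hshift.add hsym).congr' ?_
  filter_upwards [eventually_ge_atTop i₀.natAbs] with n hn
  have h0 : (0 : ℤ) ∈ Icc (i₀ - n) (i₀ + n) := mem_Icc.2 ⟨by omega, by omega⟩
  have hterm : ∀ i : ℤ, 1 / (x - i) = g (i₀ - i) := fun i => by
    simp only [g, hx]; push_cast; ring_nf
  rw [sum_congr rfl fun i _ => hterm i, sum_erase_Icc_comp_sub, sum_erase_eq_sub h0,
    sum_erase_eq_sub (by simp)]
  abel
end

section
/- Suppose φ : ℝ → ℝ satisfies |φ(x) - H(x) + 1/(απx)| ≤ K₁/x² for all |x| ≥ 1, where H is the Heaviside function, α > 0 and K₁ > 0. Write φ̃(x) = φ(x) - H(x). Then there is a constant C > 0 such that for every x ∈ ℝ with nearest integer i₀ (so x = i₀ + γ, γ ∈ (-1/2,1/2]), every δ ∈ (0, 1/2] and p₀ = 1, the limit lim_{n→∞} ∑_{i=-n, i≠i₀}^{n} φ̃((x-i)/δ) exists and satisfies |lim_{n→∞} ∑_{i=-n,i≠i₀}^n φ̃((x-i)/δ)| ≤ C δ. -/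
open Filter Finset

/-- The Heaviside function. -/
noncomputable def Heaviside (x : ℝ) : ℝ := if 0 ≤ x then 1 else 0

set_option maxHeartbeats 1000000 in
theorem tail_sum_bound_phi (φ : ℝ → ℝ) (α K₁ : ℝ) (hα : 0 < α) (hK₁ : 0 < K₁)
    (hdecay : ∀ x : ℝ, 1 ≤ |x| →
      |φ x - Heaviside x + 1 / (α * Real.pi * x)| ≤ K₁ / x ^ 2) :
    ∃ C > 0, ∀ (x : ℝ) (i₀ : ℤ) (γ δ : ℝ),
      x = i₀ + γ → γ ∈ Set.Ioc (-(1:ℝ)/2) (1/2) → δ ∈ Set.Ioc (0:ℝ) (1/2) →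
      ∃ S : ℝ,
        Tendsto (fun n : ℕ =>
            ∑ i ∈ (Finset.Icc (-(n:ℤ)) (n:ℤ)).erase i₀,
              (φ ((x - i) / δ) - Heaviside ((x - i) / δ)))
          atTop (nhds S) ∧ |S| ≤ C * δ := by
  have hπ : 0 < Real.pi := Real.pi_pos
  have hαπ : 0 < α * Real.pi := mul_pos hα hπ
  set M : ℝ := 1/(α*Real.pi) + K₁ with hMdef
  have hM0 : 0 < M := by positivity
  set D : ℝ := 2/(α*Real.pi) + 4*K₁ with hDdef
  have hD0 : 0 < D := by positivity
  have hTsum : Summable (fun m : ℕ => 1/((m:ℝ)+1)^2) := by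
    have h : Summable (fun m : ℕ => 1/((m:ℝ))^2) := by
      rw [Real.summable_one_div_nat_pow]; norm_num
    have := (summable_nat_add_iff (f := fun m : ℕ => 1/((m:ℝ))^2) 1).mpr h
    simpa using this
  set T : ℝ := ∑' m:ℕ, 1/((m:ℝ)+1)^2 with hTdef
  have hT1 : (1:ℝ) ≤ T := by
    rw [hTdef]
    simpa using Summable.le_tsum hTsum 0 (fun j _ => by positivity)
  have hT0 : 0 < T := lt_of_lt_of_le one_pos hT1
  clear_value M D T
  refine ⟨D*T, mul_pos hD0 hT0, ?_⟩
  intro x i₀ γ δ hx hγ hδ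
  obtain ⟨hγ1, hγ2⟩ := hγ
  obtain ⟨hδ0, hδ2⟩ := hδ
  have hγabs : |γ| ≤ 1/2 := abs_le.mpr ⟨by linarith, hγ2⟩
  set g : ℤ → ℝ := fun i => φ ((x - i)/δ) - Heaviside ((x - i)/δ) with hgdef
  clear_value g
  -- pointwise bound on φ - H
  have hψ : ∀ y : ℝ, 1 ≤ |y| → |φ y - Heaviside y| ≤ M/|y| := by
    intro y hy
    have hy0 : (0:ℝ) < |y| := lt_of_lt_of_le one_pos hy
    have hyne : y ≠ 0 := by intro h; rw [h] at hy0; simp at hy0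
    have h1 := hdecay y hy
    have hysq : |y| ≤ y^2 := by
      calc |y| = 1*|y| := (one_mul _).symm
        _ ≤ |y| * |y| := mul_le_mul_of_nonneg_right hy (abs_nonneg y)
        _ = |y|^2 := (pow_two _).symm
        _ = y^2 := sq_abs y
    have e1 : |φ y - Heaviside y| ≤ |φ y - Heaviside y + 1/(α*Real.pi*y)| + |1/(α*Real.pi*y)| := by
      have := abs_sub (φ y - Heaviside y + 1/(α*Real.pi*y)) (1/(α*Real.pi*y))
      simpa using this
    have e2 : |1/(α*Real.pi*y)| = 1/(α*Real.pi)*(1/|y|) := by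
      rw [abs_div, abs_one, abs_mul, abs_mul, abs_of_pos hα, abs_of_pos hπ]
      field_simp
    have e3 : K₁/y^2 ≤ K₁/|y| := by
      apply div_le_div_of_nonneg_left hK₁.le hy0 hysq
    have e4 : M/|y| = K₁/|y| + 1/(α*Real.pi)*(1/|y|) := by
      rw [hMdef]; field_simp; ring
    calc |φ y - Heaviside y| ≤ |φ y - Heaviside y + 1/(α*Real.pi*y)| + |1/(α*Real.pi*y)| := e1
      _ ≤ K₁/y^2 + 1/(α*Real.pi)*(1/|y|) := by rw [e2] at *; exact add_le_add h1 le_rfl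
      _ ≤ K₁/|y| + 1/(α*Real.pi)*(1/|y|) := by linarith
      _ = M/|y| := e4.symm
  -- distance from x to integers other than i₀
  have hxi : ∀ i : ℤ, i ≠ i₀ → 1/2 ≤ |x - (i:ℝ)| := by
    intro i hi
    have h1 : (1:ℝ) ≤ |((i₀ - i : ℤ):ℝ)| := by
      rw [← Int.cast_abs]
      exact_mod_cast Int.one_le_abs (sub_ne_zero.mpr (Ne.symm hi))
    have h2 : ((i₀ - i : ℤ):ℝ) = (x - i) - γ := by push_cast [hx]; ring
    rw [h2] at h1
    have := abs_sub (x - (i:ℝ)) γ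
    have h3 : |x - (i:ℝ) - γ| ≤ |x - (i:ℝ)| + |γ| := abs_sub _ _
    linarith
  -- per-term bound
  have hg : ∀ i : ℤ, i ≠ i₀ → |g i| ≤ M*δ/|x - (i:ℝ)| := by
    intro i hi
    have h2 := hxi i hi
    have hδle : δ ≤ |x - (i:ℝ)| := le_trans hδ2 h2
    have hxne : (0:ℝ) < |x - (i:ℝ)| := by linarith
    have hy : 1 ≤ |(x - (i:ℝ))/δ| := by
      rw [abs_div, abs_of_pos hδ0]
      exact (one_le_div hδ0).mpr hδle
    have h3 := hψ _ hy
    rw [abs_div, abs_of_pos hδ0, div_div_eq_mul_div] at h3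
    rw [hgdef]
    exact h3
  -- shell terms
  set c : ℕ → ℝ := fun m => g (i₀+((m:ℤ)+1)) + g (i₀-((m:ℤ)+1)) with hcdef
  clear_value c
  have hc : ∀ m : ℕ, |c m| ≤ D*δ/((m:ℝ)+1)^2 := by
    intro m
    set r : ℝ := (m:ℝ)+1 with hrdef
    clear_value r
    have hr1 : 1 ≤ r := by
      rw [hrdef]
      have : (0:ℝ) ≤ (m:ℝ) := Nat.cast_nonneg m
      linarith
    have hr0 : 0 < r := lt_of_lt_of_le one_pos hr1
    have hx1 : x - ((i₀ + ((m:ℤ)+1) : ℤ):ℝ) = γ - r := by push_cast [hx, hrdef]; ring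
    have hx2 : x - ((i₀ - ((m:ℤ)+1) : ℤ):ℝ) = γ + r := by push_cast [hx, hrdef]; ring
    have hd1 : r - 1/2 ≤ |γ - r| := by
      rw [abs_of_nonpos (by linarith)]; linarith
    have hd2 : r - 1/2 ≤ |γ + r| := by
      rw [abs_of_nonneg (by linarith)]; linarith
    have hne1 : γ - r ≠ 0 := by intro h; rw [h] at hd1; simp at hd1; linarith
    have hne2 : γ + r ≠ 0 := by intro h; rw [h] at hd2; simp at hd2; linarith
    set y₁ : ℝ := (γ - r)/δ with hy1def
    set y₂ : ℝ := (γ + r)/δ with hy2def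
    clear_value y₁ y₂
    have hy1 : 1 ≤ |y₁| := by
      rw [hy1def, abs_div, abs_of_pos hδ0]
      apply (one_le_div hδ0).mpr; linarith
    have hy2 : 1 ≤ |y₂| := by
      rw [hy2def, abs_div, abs_of_pos hδ0]
      apply (one_le_div hδ0).mpr; linarith
    have h1 := hdecay y₁ hy1
    have h2 := hdecay y₂ hy2
    have hcval : c m = (φ y₁ - Heaviside y₁ + 1/(α*Real.pi*y₁))
        + (φ y₂ - Heaviside y₂ + 1/(α*Real.pi*y₂))
        - (1/(α*Real.pi*y₁) + 1/(α*Real.pi*y₂)) := by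
      rw [hcdef]; simp only [hgdef, hx1, hx2, hy1def, hy2def]; ring
    -- bound the principal part
    have hy1ne : y₁ ≠ 0 := by
      rw [hy1def]; exact div_ne_zero hne1 (ne_of_gt hδ0)
    have hy2ne : y₂ ≠ 0 := by
      rw [hy2def]; exact div_ne_zero hne2 (ne_of_gt hδ0)
    have hprinc : 1/(α*Real.pi*y₁) + 1/(α*Real.pi*y₂)
        = (δ*(2*γ))/(α*Real.pi*((γ-r)*(γ+r))) := by
      rw [hy1def, hy2def]
      field_simp
      ring
    have hprodneg : (γ-r)*(γ+r) = -((r-γ)*(r+γ)) := by ring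
    have hγsq : γ^2 ≤ 1/4 := by
      have := sq_le_sq' (show -(1/2:ℝ) ≤ γ by linarith) hγ2
      calc γ^2 ≤ (1/2:ℝ)^2 := this
        _ = 1/4 := by norm_num
    have hrsq : 1 ≤ r^2 := by
      rw [pow_two]
      calc (1:ℝ) = 1*1 := (one_mul 1).symm
        _ ≤ r*r := mul_le_mul hr1 hr1 zero_le_one hr0.le
    have hprodlb : r^2/2 ≤ (r-γ)*(r+γ) := by
      have hexp : (r-γ)*(r+γ) = r^2 - γ^2 := by ring
      rw [hexp]; linarith
    have habs_princ : |1/(α*Real.pi*y₁) + 1/(α*Real.pi*y₂)| ≤ 2*δ/(α*Real.pi*r^2) := by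
      rw [hprinc, abs_div]
      have hnum : |δ*(2*γ)| ≤ δ := by
        rw [abs_mul, abs_of_pos hδ0, abs_mul]
        have h2γ : |(2:ℝ)| * |γ| ≤ 1 := by rw [abs_two]; linarith
        calc δ * (|(2:ℝ)| * |γ|) ≤ δ * 1 := mul_le_mul_of_nonneg_left h2γ hδ0.le
          _ = δ := mul_one δ
      have hpos2 : 0 < (r-γ)*(r+γ) := lt_of_lt_of_le (by positivity) hprodlb
      have hden : α*Real.pi*(r^2/2) ≤ |α*Real.pi*((γ-r)*(γ+r))| := by
        rw [abs_mul, abs_of_pos hαπ, hprodneg, abs_neg, abs_of_pos hpos2]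
        exact mul_le_mul_of_nonneg_left hprodlb hαπ.le
      have hdenpos : 0 < α*Real.pi*(r^2/2) := by positivity
      calc |δ*(2*γ)| / |α*Real.pi*((γ-r)*(γ+r))|
          ≤ δ / (α*Real.pi*(r^2/2)) := by
            apply div_le_div₀ (le_of_lt hδ0) hnum hdenpos hden
        _ = 2*δ/(α*Real.pi*r^2) := by
            rw [div_eq_div_iff (by positivity) (by positivity)]; ring
    -- bound the error parts
    have herr1 : K₁/y₁^2 ≤ 2*K₁*δ/r^2 := by
      have hsq : y₁^2 = (γ-r)^2/δ^2 := by rw [hy1def]; rw [div_pow]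
      have hh : r/2 ≤ r - γ := by linarith
      have hlb : r^2/4 ≤ (γ-r)^2 := by
        calc r^2/4 = (r/2)*(r/2) := by ring
          _ ≤ (r-γ)*(r-γ) := mul_le_mul hh hh (by positivity) (by linarith)
          _ = (γ-r)^2 := by ring
      have hδsq : δ^2 ≤ δ/2 := by
        calc δ^2 = δ*δ := pow_two δ
          _ ≤ δ*(1/2) := mul_le_mul_of_nonneg_left hδ2 hδ0.le
          _ = δ/2 := by ring
      rw [hsq, div_div_eq_mul_div]
      calc K₁*δ^2/(γ-r)^2 ≤ (K₁*(δ/2))/(r^2/4) := by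
            apply div_le_div₀ (by positivity) (mul_le_mul_of_nonneg_left hδsq hK₁.le) (by positivity) hlb
        _ = 2*K₁*δ/r^2 := by
            rw [div_eq_div_iff (by positivity) (by positivity)]; ring
    have herr2 : K₁/y₂^2 ≤ 2*K₁*δ/r^2 := by
      have hsq : y₂^2 = (γ+r)^2/δ^2 := by rw [hy2def]; rw [div_pow]
      have hh : r/2 ≤ r + γ := by linarith
      have hlb : r^2/4 ≤ (γ+r)^2 := by
        calc r^2/4 = (r/2)*(r/2) := by ring
          _ ≤ (r+γ)*(r+γ) := mul_le_mul hh hh (by positivity) (by linarith)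
          _ = (γ+r)^2 := by ring
      have hδsq : δ^2 ≤ δ/2 := by
        calc δ^2 = δ*δ := pow_two δ
          _ ≤ δ*(1/2) := mul_le_mul_of_nonneg_left hδ2 hδ0.le
          _ = δ/2 := by ring
      rw [hsq, div_div_eq_mul_div]
      calc K₁*δ^2/(γ+r)^2 ≤ (K₁*(δ/2))/(r^2/4) := by
            apply div_le_div₀ (by positivity) (mul_le_mul_of_nonneg_left hδsq hK₁.le) (by positivity) hlb
        _ = 2*K₁*δ/r^2 := by
            rw [div_eq_div_iff (by positivity) (by positivity)]; ring
    have hfinal : |c m| ≤ 2*K₁*δ/r^2 + 2*K₁*δ/r^2 + 2*δ/(α*Real.pi*r^2) := by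
      rw [hcval]
      have := abs_add_le (φ y₁ - Heaviside y₁ + 1/(α*Real.pi*y₁))
        (φ y₂ - Heaviside y₂ + 1/(α*Real.pi*y₂))
      have h3 := abs_sub ((φ y₁ - Heaviside y₁ + 1/(α*Real.pi*y₁))
        + (φ y₂ - Heaviside y₂ + 1/(α*Real.pi*y₂))) (1/(α*Real.pi*y₁) + 1/(α*Real.pi*y₂))
      linarith
    have heq : D*δ/r^2 = 2*K₁*δ/r^2 + 2*K₁*δ/r^2 + 2*δ/(α*Real.pi*r^2) := by
      rw [hDdef]; field_simp; ring
    linarith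
  -- summability
  have hbnd_summable : Summable (fun m : ℕ => D*δ/((m:ℝ)+1)^2) := by
    have := hTsum.mul_left (D*δ)
    refine this.congr (fun m => ?_)
    rw [mul_one_div]
  have hcs : Summable c := by
    apply Summable.of_norm_bounded hbnd_summable
    intro m
    rw [Real.norm_eq_abs]
    exact hc m
  refine ⟨∑' m, c m, ?_, ?_⟩
  · -- convergence
    -- shifted partial sums
    have key : ∀ n : ℕ, ∑ i ∈ (Finset.Icc (i₀-(n:ℤ)) (i₀+(n:ℤ))).erase i₀, g i
        = ∑ m ∈ Finset.range n, c m := by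
      intro n
      induction n with
      | zero => simp
      | succ n ih =>
        have hcast : ((n+1:ℕ):ℤ) = (n:ℤ)+1 := by push_cast; ring
        rw [hcast, Finset.sum_range_succ, ← ih]
        have hIcc : Finset.Icc (i₀-((n:ℤ)+1)) (i₀+((n:ℤ)+1))
            = insert (i₀-((n:ℤ)+1)) (insert (i₀+((n:ℤ)+1)) (Finset.Icc (i₀-(n:ℤ)) (i₀+(n:ℤ)))) := by
          ext j
          simp only [Finset.mem_Icc, Finset.mem_insert]
          omega
        rw [hIcc]
        rw [Finset.erase_insert_of_ne (by omega), Finset.erase_insert_of_ne (by omega)]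
        rw [Finset.sum_insert (by simp only [Finset.mem_insert, Finset.mem_erase, Finset.mem_Icc]; omega)]
        rw [Finset.sum_insert (by simp only [Finset.mem_erase, Finset.mem_Icc]; omega)]
        rw [hcdef]
        ring
    have ht : Tendsto (fun n : ℕ => ∑ i ∈ (Finset.Icc (i₀-(n:ℤ)) (i₀+(n:ℤ))).erase i₀, g i)
        atTop (nhds (∑' m, c m)) := by
      have := hcs.hasSum.tendsto_sum_nat
      simpa only [key] using this
    -- difference tends to zero
    set L : ℕ → ℝ := fun n => (n:ℝ) + 1/2 - |x| with hLdef
    have hdiff : Tendsto (fun n : ℕ =>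
        (∑ i ∈ (Finset.Icc (-(n:ℤ)) (n:ℤ)).erase i₀, g i)
        - ∑ i ∈ (Finset.Icc (i₀-(n:ℤ)) (i₀+(n:ℤ))).erase i₀, g i) atTop (nhds 0) := by
      apply squeeze_zero_norm' (a := fun n => 2*(i₀.natAbs:ℝ)*(M*δ)/L n)
      · -- eventual bound
        rw [eventually_atTop]
        refine ⟨i₀.natAbs + ⌈|x|⌉₊ + 1, ?_⟩
        intro n hn
        have hnat1 : i₀.natAbs ≤ n := by omega
        have hnat2 : ⌈|x|⌉₊ + 1 ≤ n := by omega
        have hxn : |x| + 1 ≤ (n:ℝ) := by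
          have h1 : |x| ≤ (⌈|x|⌉₊:ℝ) := Nat.le_ceil _
          have h2 : ((⌈|x|⌉₊ + 1:ℕ):ℝ) ≤ (n:ℝ) := by exact_mod_cast hnat2
          push_cast at h2
          linarith
        have hLpos : 0 < L n := by rw [hLdef]; simp only; linarith
        have hi₀mem : i₀ ∈ Finset.Icc (-(n:ℤ)) (n:ℤ) := by
          simp only [Finset.mem_Icc]; omega
        have hi₀mem' : i₀ ∈ Finset.Icc (i₀-(n:ℤ)) (i₀+(n:ℤ)) := by
          simp only [Finset.mem_Icc]; omega
        set A := Finset.Icc (-(n:ℤ)) (n:ℤ) with hA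
        set B := Finset.Icc (i₀-(n:ℤ)) (i₀+(n:ℤ)) with hB
        have hsplit : (∑ i ∈ A.erase i₀, g i) - ∑ i ∈ B.erase i₀, g i
            = (∑ i ∈ A \ B, g i) - ∑ i ∈ B \ A, g i := by
          rw [Finset.sum_erase_eq_sub hi₀mem, Finset.sum_erase_eq_sub hi₀mem']
          rw [Finset.sum_sdiff_sub_sum_sdiff]
          ring
        -- term bounds on A \ B
        have htermA : ∀ i ∈ A \ B, |g i| ≤ M*δ/L n := by
          intro i hi
          rw [Finset.mem_sdiff, hA, hB] at hi
          obtain ⟨hiA, hiB⟩ := hi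
          rw [Finset.mem_Icc] at hiA
          rw [Finset.mem_Icc] at hiB
          have hine : i ≠ i₀ := by omega
          have hfar : (n:ℝ)+1 ≤ |(i₀:ℝ) - i| := by
            have : (n:ℤ)+1 ≤ i₀ - i ∨ (n:ℤ)+1 ≤ i - i₀ := by omega
            rcases this with h | h
            · apply le_abs.mpr; left; exact_mod_cast h
            · apply le_abs.mpr; right
              have : ((n:ℤ):ℝ)+1 ≤ ((i - i₀:ℤ):ℝ) := by exact_mod_cast h
              push_cast at this ⊢
              linarith
          have heq2 : (i₀:ℝ) - i = (x - i) - γ := by rw [hx]; ring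
          have h3 : |x - (i:ℝ) - γ| ≤ |x - (i:ℝ)| + |γ| := abs_sub _ _
          rw [heq2] at hfar
          have hLle : L n ≤ |x - (i:ℝ)| := by
            rw [hLdef]; simp only
            have : 0 ≤ |x| := abs_nonneg x
            linarith
          calc |g i| ≤ M*δ/|x - (i:ℝ)| := hg i hine
            _ ≤ M*δ/L n := by
              apply div_le_div_of_nonneg_left (by positivity) hLpos hLle
        -- term bounds on B \ A
        have htermB : ∀ i ∈ B \ A, |g i| ≤ M*δ/L n := by
          intro i hi
          rw [Finset.mem_sdiff, hA, hB] at hi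
          obtain ⟨hiB, hiA⟩ := hi
          rw [Finset.mem_Icc] at hiA
          rw [Finset.mem_Icc] at hiB
          have hine : i ≠ i₀ := by omega
          have hfar : (n:ℝ)+1 ≤ |(i:ℝ)| := by
            have : (n:ℤ)+1 ≤ i ∨ (n:ℤ)+1 ≤ -i := by omega
            rcases this with h | h
            · apply le_abs.mpr; left; exact_mod_cast h
            · apply le_abs.mpr; right
              have : ((n:ℤ):ℝ)+1 ≤ ((-i:ℤ):ℝ) := by exact_mod_cast h
              push_cast at this ⊢
              linarith
          have h3 : |(i:ℝ)| ≤ |x - (i:ℝ)| + |x| := by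
            have := abs_sub (x - (i:ℝ)) x
            have h4 : |x - (i:ℝ) - x| = |(i:ℝ)| := by rw [show x - (i:ℝ) - x = -(i:ℝ) from by ring, abs_neg]
            linarith
          have hLle : L n ≤ |x - (i:ℝ)| := by
            rw [hLdef]; simp only
            linarith
          calc |g i| ≤ M*δ/|x - (i:ℝ)| := hg i hine
            _ ≤ M*δ/L n := by
              apply div_le_div_of_nonneg_left (by positivity) hLpos hLle
        -- cardinality bounds
        have hcardA : (A \ B).card ≤ i₀.natAbs := by
          have hsub : A \ B ⊆ Finset.Icc (-(n:ℤ)) (i₀-(n:ℤ)-1) ∪ Finset.Icc (i₀+(n:ℤ)+1) (n:ℤ) := by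
            intro i hi
            rw [Finset.mem_sdiff, hA, hB, Finset.mem_Icc, Finset.mem_Icc] at hi
            rw [Finset.mem_union, Finset.mem_Icc, Finset.mem_Icc]
            omega
          calc (A \ B).card ≤ _ := Finset.card_le_card hsub
            _ ≤ (Finset.Icc (-(n:ℤ)) (i₀-(n:ℤ)-1)).card + (Finset.Icc (i₀+(n:ℤ)+1) (n:ℤ)).card :=
              Finset.card_union_le _ _
            _ ≤ i₀.natAbs := by
              rw [Int.card_Icc, Int.card_Icc]
              omega
        have hcardB : (B \ A).card ≤ i₀.natAbs := by
          have hsub : B \ A ⊆ Finset.Icc (i₀-(n:ℤ)) (-(n:ℤ)-1) ∪ Finset.Icc ((n:ℤ)+1) (i₀+(n:ℤ)) := by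
            intro i hi
            rw [Finset.mem_sdiff, hA, hB, Finset.mem_Icc, Finset.mem_Icc] at hi
            rw [Finset.mem_union, Finset.mem_Icc, Finset.mem_Icc]
            omega
          calc (B \ A).card ≤ _ := Finset.card_le_card hsub
            _ ≤ (Finset.Icc (i₀-(n:ℤ)) (-(n:ℤ)-1)).card + (Finset.Icc ((n:ℤ)+1) (i₀+(n:ℤ))).card :=
              Finset.card_union_le _ _
            _ ≤ i₀.natAbs := by
              rw [Int.card_Icc, Int.card_Icc]
              omega
        have hMδL : 0 ≤ M*δ/L n := by positivity
        have hsumA : |∑ i ∈ A \ B, g i| ≤ (i₀.natAbs:ℝ) * (M*δ/L n) := by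
          calc |∑ i ∈ A \ B, g i| ≤ ∑ i ∈ A \ B, |g i| := Finset.abs_sum_le_sum_abs _ _
            _ ≤ (A \ B).card • (M*δ/L n) := Finset.sum_le_card_nsmul _ _ _ htermA
            _ = ((A \ B).card : ℝ) * (M*δ/L n) := by rw [nsmul_eq_mul]
            _ ≤ (i₀.natAbs:ℝ) * (M*δ/L n) := by
              apply mul_le_mul_of_nonneg_right _ hMδL
              exact_mod_cast hcardA
        have hsumB : |∑ i ∈ B \ A, g i| ≤ (i₀.natAbs:ℝ) * (M*δ/L n) := by
          calc |∑ i ∈ B \ A, g i| ≤ ∑ i ∈ B \ A, |g i| := Finset.abs_sum_le_sum_abs _ _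
            _ ≤ (B \ A).card • (M*δ/L n) := Finset.sum_le_card_nsmul _ _ _ htermB
            _ = ((B \ A).card : ℝ) * (M*δ/L n) := by rw [nsmul_eq_mul]
            _ ≤ (i₀.natAbs:ℝ) * (M*δ/L n) := by
              apply mul_le_mul_of_nonneg_right _ hMδL
              exact_mod_cast hcardB
        rw [Real.norm_eq_abs, hsplit]
        have habs := abs_sub (∑ i ∈ A \ B, g i) (∑ i ∈ B \ A, g i)
        have : 2*(i₀.natAbs:ℝ)*(M*δ)/L n = (i₀.natAbs:ℝ) * (M*δ/L n) + (i₀.natAbs:ℝ) * (M*δ/L n) := by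
          field_simp; ring
        rw [this]
        linarith
      · -- the bound tends to zero
        apply Tendsto.div_atTop tendsto_const_nhds
        rw [hLdef]
        have h := tendsto_atTop_add_const_right atTop (1/2 - |x|)
          (tendsto_natCast_atTop_atTop (R := ℝ))
        exact Tendsto.congr (fun n => by ring) h
    have := hdiff.add ht
    simpa using this
  · -- the bound on |S|
    have habs : |∑' m, c m| ≤ ∑' m, |c m| := by
      have := norm_tsum_le_tsum_norm (f := c) (by simpa [Real.norm_eq_abs] using hcs.abs)
      simpa [Real.norm_eq_abs] using this
    have hle : ∑' m, |c m| ≤ ∑' m : ℕ, D*δ/((m:ℝ)+1)^2 := Summable.tsum_le_tsum hc hcs.abs hbnd_summable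
    have heq : ∑' m : ℕ, D*δ/((m:ℝ)+1)^2 = D*δ*T := by
      rw [hTdef, ← tsum_mul_left]
      congr 1 with m
      rw [mul_one_div]
    calc |∑' m, c m| ≤ ∑' m, |c m| := habs
      _ ≤ D*δ*T := by rw [← heq]; exact hle
      _ = D*T*δ := by ring
end

section
/- Suppose φ : ℝ → ℝ is smooth, bounded, and φ'' satisfies |φ''(x)| ≤ K/(1+x²) for all x. Suppose W ∈ C⁴(ℝ) is 1-periodic with W''(0) = α > 0, W''(φ) > 0 outside [-R,R] for some R > 0, and φ'' solves I₁[φ''] = W''(φ)φ'' + W'''(φ)(φ')², where I₁ is the half Laplacian. If v is a bounded C² function satisfying I₁[v](x) - W''(φ(x))v(x) ≥ 0 for all |x| > R, v < 0 on [-R,R], and v attains its supremum, then v ≤ 0 on ℝ. -/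
open Filter MeasureTheory

/-- The half Laplacian `I₁ = -(-Δ)^{1/2}` via the Lévy–Khintchine formula with
`μ(dz) = dz/(π z²)`, split into the small-jump and large-jump parts. -/
noncomputable def halfLap (v : ℝ → ℝ) (x : ℝ) : ℝ :=
  (∫ z in Set.Icc (-1:ℝ) 1, (v (x + z) - v x - deriv v x * z) / (Real.pi * z ^ 2)) +
  ∫ z in {z : ℝ | 1 < |z|}, (v (x + z) - v x) / (Real.pi * z ^ 2)

theorem comparison_step_phi'' (φ W v : ℝ → ℝ) (K α R : ℝ)
    (hφsmooth : ContDiff ℝ (⊤ : ℕ∞) φ) (hφbd : ∃ M, ∀ x, |φ x| ≤ M)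
    (hK : 0 < K) (hφ'' : ∀ x : ℝ, |deriv (deriv φ) x| ≤ K / (1 + x ^ 2))
    (hW : ContDiff ℝ 4 W) (hWper : ∀ x : ℝ, W (x + 1) = W x)
    (hα : iteratedDeriv 2 W 0 = α) (hαpos : 0 < α)
    (hR : 0 < R)
    (hWpos : ∀ x : ℝ, R < |x| → 0 < iteratedDeriv 2 W (φ x))
    (hφ''eq : ∀ x : ℝ, halfLap (deriv (deriv φ)) x =
      iteratedDeriv 2 W (φ x) * deriv (deriv φ) x +
      iteratedDeriv 3 W (φ x) * (deriv φ x) ^ 2)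
    (hv : ContDiff ℝ 2 v) (hvbd : ∃ M, ∀ x, |v x| ≤ M)
    (hsupersol : ∀ x : ℝ, R < |x| → 0 ≤ halfLap v x - iteratedDeriv 2 W (φ x) * v x)
    (hvneg : ∀ x ∈ Set.Icc (-R) R, v x < 0)
    (hattain : ∃ x₀ : ℝ, ∀ x, v x ≤ v x₀) :
    ∀ x : ℝ, v x ≤ 0 := by
  intro x
  obtain ⟨x₀, hx₀⟩ := hattain
  by_contra h
  push_neg at h
  have hpos : 0 < v x₀ := lt_of_lt_of_le h (hx₀ x)
  have hx₀R : R < |x₀| := by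
    by_contra hle
    push_neg at hle
    have := hvneg x₀ (abs_le.1 hle)
    linarith
  have hloc : IsLocalMax v x₀ := Filter.Eventually.of_forall hx₀
  have hd : deriv v x₀ = 0 := hloc.deriv_eq_zero
  have h1 : (∫ z in Set.Icc (-1:ℝ) 1,
      (v (x₀ + z) - v x₀ - deriv v x₀ * z) / (Real.pi * z ^ 2)) ≤ 0 := by
    apply integral_nonpos
    intro z
    apply div_nonpos_of_nonpos_of_nonneg
    · rw [hd]; have := hx₀ (x₀ + z); simp; linarith
    · positivity
  have h2 : (∫ z in {z : ℝ | 1 < |z|},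
      (v (x₀ + z) - v x₀) / (Real.pi * z ^ 2)) ≤ 0 := by
    apply integral_nonpos
    intro z
    apply div_nonpos_of_nonpos_of_nonneg
    · have := hx₀ (x₀ + z); linarith
    · positivity
  have hHL : halfLap v x₀ ≤ 0 := by
    unfold halfLap; linarith
  have hWp := hWpos x₀ hx₀R
  have hs := hsupersol x₀ hx₀R
  nlinarith
end

section
/- With the notation and hypotheses of the ansatz (φ with |φ - H + 1/(απ·)| ≤ K₁/x² for |x| ≥ 1 and ψ with |ψ - K₂/·| ≤ K₃/x² for |x| ≥ 1, both bounded), the limit function h_δ(x) = lim_{n→∞} s_{δ,n}(x) satisfies |h_δ(x) - x| ≤ C for all x ∈ ℝ, with C independent of x. -/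
/-!
Split `φ + δ ψ = Heaviside + G`. Summed over the lattice `x - i`, `i ∈ [-n, n]`, the Heaviside
parts count the integers `i ≤ x`, giving `⌊x⌋ + n + 1`, which cancels the `- n` up to an error
at most `1`. The fluctuation `G` behaves like `c / y + O(1 / y²)`. Centre the index window at the
integer `m` nearest to `x`: the terms of indices `m ± j` pair off, so the `1 / (x - i)` parts
telescope to a sum at most `2` and the `1 / (x - i)²` parts sum to at most `12`; the centre term is
bounded by `sup |G|`; and the `2 |m|` indices outside the symmetric window lie at distance at least
`n - |m|` from `x`, so they contribute at most `1` once `n` is large. None of these bounds depends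
on `x`, and they pass to the limit.
-/

open Filter Finset

lemma sum_Icc_neg_erase_zero_eq_sum_range {M : Type*} [AddCommMonoid M] (g : ℤ → M) (K : ℕ) :
    ∑ j ∈ (Icc (-(K : ℤ)) K).erase 0, g j = ∑ k ∈ range K, (g (k + 1) + g (-(k + 1))) := by
  induction K with
  | zero => simp
  | succ K ih =>
    have hset : (Icc (-((K + 1 : ℕ) : ℤ)) (K + 1 : ℕ)).erase 0 =
        insert ((K : ℤ) + 1) (insert (-((K : ℤ) + 1)) ((Icc (-(K : ℤ)) K).erase 0)) := by
      ext i; simp only [mem_erase, mem_Icc, mem_insert]; omega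
    rw [hset, sum_insert (by simp only [mem_insert, mem_erase, mem_Icc]; omega),
      sum_insert (by simp only [mem_erase, mem_Icc]; omega), ih, sum_range_succ]
    abel

lemma abs_inv_sub_add_inv_add_le {t s : ℝ} (ht : |t| ≤ 1 / 2) (hs : 0 ≤ s) :
    |(t - (s + 1))⁻¹ + (t + (s + 1))⁻¹| ≤ (s + 1 / 2)⁻¹ - (s + 3 / 2)⁻¹ := by
  obtain ⟨ht₁, ht₂⟩ := abs_le.1 ht
  have hden : (s + 1 / 2) * (s + 3 / 2) ≤ (s + 1) ^ 2 - t ^ 2 := by nlinarith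
  have hpair : (t - (s + 1))⁻¹ + (t + (s + 1))⁻¹ = -(2 * t) / ((s + 1) ^ 2 - t ^ 2) := by
    have : (s + 1) ^ 2 - t ^ 2 ≠ 0 := by nlinarith
    field_simp [show t - (s + 1) ≠ 0 by linarith, show t + (s + 1) ≠ 0 by linarith]; ring
  rw [hpair, inv_sub_inv (by linarith) (by linarith), abs_div, abs_neg,
    abs_of_pos (a := (s + 1) ^ 2 - t ^ 2) (by nlinarith)]
  gcongr
  · linarith
  · rw [abs_mul, abs_two]; linarith

lemma inv_sq_sub_add_inv_sq_add_le {t s : ℝ} (ht : |t| ≤ 1 / 2) (hs : 0 ≤ s) :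
    ((t - (s + 1)) ^ 2)⁻¹ + ((t + (s + 1)) ^ 2)⁻¹ ≤ 6 * ((s + 1 / 2)⁻¹ - (s + 3 / 2)⁻¹) := by
  obtain ⟨ht₁, ht₂⟩ := abs_le.1 ht
  have h₁ : ((t - (s + 1)) ^ 2)⁻¹ ≤ ((s + 1 / 2) ^ 2)⁻¹ := inv_anti₀ (by positivity) (by nlinarith)
  have h₂ : ((t + (s + 1)) ^ 2)⁻¹ ≤ ((s + 1 / 2) ^ 2)⁻¹ := inv_anti₀ (by positivity) (by nlinarith)
  have h₃ : 2 * ((s + 1 / 2) ^ 2)⁻¹ ≤ 6 * ((s + 1 / 2)⁻¹ - (s + 3 / 2)⁻¹) := by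
    rw [inv_sub_inv (by positivity) (by positivity), ← div_eq_mul_inv, mul_div_assoc',
      div_le_div_iff₀ (by positivity) (by positivity)]
    nlinarith
  linarith

lemma sum_range_inv_add_half_sub_inv_le (K : ℕ) :
    ∑ k ∈ range K, (((k : ℝ) + 1 / 2)⁻¹ - ((k : ℝ) + 3 / 2)⁻¹) ≤ 2 := by
  have htele := sum_range_sub' (fun k : ℕ => ((k : ℝ) + 1 / 2)⁻¹) K
  push_cast at htele
  rw [show ∑ k ∈ range K, (((k : ℝ) + 1 / 2)⁻¹ - ((k : ℝ) + 3 / 2)⁻¹) =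
      ∑ k ∈ range K, (((k : ℝ) + 1 / 2)⁻¹ - ((k : ℝ) + 1 + 1 / 2)⁻¹) by
    refine sum_congr rfl fun k _ => ?_; ring_nf, htele]
  norm_num
  positivity

lemma abs_sum_inv_sub_intCast_le {t : ℝ} (ht : |t| ≤ 1 / 2) (K : ℕ) :
    |∑ j ∈ (Icc (-(K : ℤ)) K).erase 0, (t - j)⁻¹| ≤ 2 := by
  rw [sum_Icc_neg_erase_zero_eq_sum_range]
  refine (abs_sum_le_sum_abs _ _).trans (le_trans (sum_le_sum fun k _ => ?_)
    (sum_range_inv_add_half_sub_inv_le K))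
  push_cast
  rw [sub_neg_eq_add]
  exact abs_inv_sub_add_inv_add_le ht k.cast_nonneg

lemma sum_inv_sq_sub_intCast_le {t : ℝ} (ht : |t| ≤ 1 / 2) (K : ℕ) :
    ∑ j ∈ (Icc (-(K : ℤ)) K).erase 0, ((t - j) ^ 2)⁻¹ ≤ 12 := by
  rw [sum_Icc_neg_erase_zero_eq_sum_range]
  calc _ ≤ ∑ k ∈ range K, 6 * (((k : ℝ) + 1 / 2)⁻¹ - ((k : ℝ) + 3 / 2)⁻¹) := by
        refine sum_le_sum fun k _ => ?_
        push_cast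
        rw [sub_neg_eq_add]
        exact inv_sq_sub_add_inv_sq_add_le ht k.cast_nonneg
    _ ≤ 6 * 2 := by rw [← mul_sum]; gcongr; exact sum_range_inv_add_half_sub_inv_le K
    _ = 12 := by norm_num

lemma add_half_le_abs_sub_intCast {t : ℝ} (ht : |t| ≤ 1 / 2) {K : ℕ} {j : ℤ}
    (hj : (K : ℤ) + 1 ≤ |j|) : (K : ℝ) + 1 / 2 ≤ |t - j| := by
  have hj' : (K : ℝ) + 1 ≤ |(j : ℝ)| := by rw [← Int.cast_abs]; exact_mod_cast hj
  have := abs_sub_abs_le_abs_sub (j : ℝ) t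
  rw [abs_sub_comm] at this
  linarith

section Tail

variable {F : ℝ → ℝ} {c B : ℝ}

lemma nonneg_of_forall_abs_sub_div_le (hF : ∀ z, 1 / 2 ≤ |z| → |F z - c / z| ≤ B / z ^ 2) :
    0 ≤ B := by
  simpa using (abs_nonneg _).trans (hF 1 (by norm_num))

lemma abs_le_div_abs_of_forall_abs_sub_div_le
    (hF : ∀ z, 1 / 2 ≤ |z| → |F z - c / z| ≤ B / z ^ 2) {z : ℝ} (hz : 1 / 2 ≤ |z|) :
    |F z| ≤ (|c| + 2 * B) / |z| := by
  have hB := nonneg_of_forall_abs_sub_div_le hF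
  have hz0 : 0 < |z| := by linarith
  have hsq : B / z ^ 2 ≤ 2 * B / |z| := by
    rw [← sq_abs, div_le_div_iff₀ (by positivity) hz0]
    nlinarith [mul_nonneg hB hz0.le]
  calc |F z| ≤ |F z - c / z| + |c / z| := by linarith [abs_sub_abs_le_abs_sub (F z) (c / z)]
    _ ≤ 2 * B / |z| + |c| / |z| := by rw [abs_div]; linarith [hF z hz]
    _ = (|c| + 2 * B) / |z| := by ring

lemma abs_sum_Icc_erase_zero_le (hF : ∀ z, 1 / 2 ≤ |z| → |F z - c / z| ≤ B / z ^ 2)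
    {t : ℝ} (ht : |t| ≤ 1 / 2) (K : ℕ) :
    |∑ j ∈ (Icc (-(K : ℤ)) K).erase 0, F (t - j)| ≤ 2 * |c| + 12 * B := by
  have hB := nonneg_of_forall_abs_sub_div_le hF
  have hsplit : ∑ j ∈ (Icc (-(K : ℤ)) K).erase 0, F (t - j) =
      c * ∑ j ∈ (Icc (-(K : ℤ)) K).erase 0, (t - j)⁻¹ +
        ∑ j ∈ (Icc (-(K : ℤ)) K).erase 0, (F (t - j) - c / (t - j)) := by
    rw [mul_sum, ← sum_add_distrib]
    exact sum_congr rfl fun j _ => by ring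
  have hmain : |c * ∑ j ∈ (Icc (-(K : ℤ)) K).erase 0, (t - j)⁻¹| ≤ 2 * |c| := by
    rw [abs_mul, mul_comm 2]
    exact mul_le_mul_of_nonneg_left (abs_sum_inv_sub_intCast_le ht K) (abs_nonneg c)
  have hrest : |∑ j ∈ (Icc (-(K : ℤ)) K).erase 0, (F (t - j) - c / (t - j))| ≤ 12 * B := by
    calc _ ≤ ∑ j ∈ (Icc (-(K : ℤ)) K).erase 0, B * ((t - j) ^ 2)⁻¹ := by
          refine (abs_sum_le_sum_abs _ _).trans (sum_le_sum fun j hj => ?_)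
          have hj := add_half_le_abs_sub_intCast (K := 0) ht
            (by simpa using Int.one_le_abs (mem_erase.1 hj).1)
          simpa [div_eq_mul_inv] using hF _ (by simpa using hj)
      _ ≤ B * 12 := by
          rw [← mul_sum]; exact mul_le_mul_of_nonneg_left (sum_inv_sq_sub_intCast_le ht K) hB
      _ = 12 * B := mul_comm _ _
  rw [hsplit]
  exact (abs_add_le _ _).trans (add_le_add hmain hrest)

lemma abs_sum_le_card_mul_of_le_abs (hF : ∀ z, 1 / 2 ≤ |z| → |F z - c / z| ≤ B / z ^ 2)
    {t : ℝ} (ht : |t| ≤ 1 / 2) {K : ℕ} (R : Finset ℤ) (hR : ∀ j ∈ R, (K : ℤ) + 1 ≤ |j|) :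
    |∑ j ∈ R, F (t - j)| ≤ #R * ((|c| + 2 * B) / (K + 1 / 2)) := by
  have hB := nonneg_of_forall_abs_sub_div_le hF
  refine (abs_sum_le_sum_abs _ _).trans ?_
  rw [← nsmul_eq_mul]
  refine sum_le_card_nsmul _ _ _ fun j hj => ?_
  have hfar := add_half_le_abs_sub_intCast ht (hR j hj)
  refine (abs_le_div_abs_of_forall_abs_sub_div_le hF ?_).trans ?_
  · linarith [K.cast_nonneg (α := ℝ)]
  · gcongr

lemma abs_sum_Icc_sub_sub_le {M : ℝ} (hM : ∀ z, |F z| ≤ M)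
    (hF : ∀ z, 1 / 2 ≤ |z| → |F z - c / z| ≤ B / z ^ 2) {t : ℝ} (ht : |t| ≤ 1 / 2) {m : ℤ}
    {n : ℕ} (hn : m.natAbs + 2 * m.natAbs * (|c| + 2 * B) ≤ n) :
    |∑ j ∈ Icc (-(n : ℤ) - m) (n - m), F (t - j)| ≤ M + 2 * |c| + 12 * B + 1 := by
  obtain ⟨K, rfl⟩ : ∃ K : ℕ, n = K + m.natAbs := ⟨n - m.natAbs, by
    have : (m.natAbs : ℝ) ≤ n := by nlinarith [abs_nonneg c, nonneg_of_forall_abs_sub_div_le hF]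
    exact (Nat.sub_add_cancel (by exact_mod_cast this)).symm⟩
  have hsub : Icc (-(K : ℤ)) K ⊆ Icc (-((K + m.natAbs : ℕ) : ℤ) - m) ((K + m.natAbs : ℕ) - m) := by
    intro j; simp only [mem_Icc]; omega
  set R := Icc (-((K + m.natAbs : ℕ) : ℤ) - m) ((K + m.natAbs : ℕ) - m) \ Icc (-(K : ℤ)) K
  have hRcard : (#R : ℝ) = 2 * m.natAbs := by
    rw [card_sdiff_of_subset hsub, Int.card_Icc, Int.card_Icc]
    norm_cast; omega
  have hRfar : ∀ j ∈ R, (K : ℤ) + 1 ≤ |j| := by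
    intro j hj
    simp only [R, Finset.mem_sdiff, mem_Icc] at hj
    rcases le_or_gt 0 j with h | h
    · rw [abs_of_nonneg h]; omega
    · rw [abs_of_neg h]; omega
  have hfar : |∑ j ∈ R, F (t - j)| ≤ 1 := by
    refine (abs_sum_le_card_mul_of_le_abs hF ht R hRfar).trans ?_
    rw [hRcard, ← mul_div_assoc, div_le_one (by positivity)]
    push_cast at hn
    linarith
  have hnear := abs_sum_Icc_erase_zero_le hF ht K
  have hcentre := hM (t - (0 : ℤ))
  rw [← sum_sdiff hsub, ← add_sum_erase _ _ (show (0 : ℤ) ∈ Icc (-(K : ℤ)) K by simp)]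
  refine (abs_add_le _ _).trans ((add_le_add_right (abs_add_le _ _) _).trans ?_)
  linarith

theorem eventually_abs_sum_Icc_le {M : ℝ} (hM : ∀ z, |F z| ≤ M)
    (hF : ∀ z, 1 / 2 ≤ |z| → |F z - c / z| ≤ B / z ^ 2) (x : ℝ) :
    ∀ᶠ n : ℕ in atTop, |∑ i ∈ Icc (-(n : ℤ)) n, F (x - i)| ≤ M + 2 * |c| + 12 * B + 1 := by
  filter_upwards [eventually_ge_atTop
    ⌈(round x).natAbs + 2 * (round x).natAbs * (|c| + 2 * B)⌉₊] with n hn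
  have hshift : ∑ i ∈ Icc (-(n : ℤ)) n, F (x - i) =
      ∑ j ∈ Icc (-(n : ℤ) - round x) (n - round x), F ((x - round x) - j) := by
    have h := sum_map (Icc (-(n : ℤ) - round x) (n - round x)) (addRightEmbedding (round x))
      fun i => F (x - i)
    rw [map_add_right_Icc, sub_add_cancel, sub_add_cancel] at h
    rw [h]
    exact sum_congr rfl fun i _ => by simp only [addRightEmbedding_apply]; push_cast; ring_nf
  rw [hshift]
  exact abs_sum_Icc_sub_sub_le hM hF (abs_sub_round x) (Nat.ceil_le.1 hn)

end Tail

lemma heaviside_div_of_pos {a : ℝ} (ha : 0 < a) (y : ℝ) : Heaviside (y / a) = Heaviside y := by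
  simp only [Heaviside, le_div_iff₀ ha, zero_mul]

lemma abs_heaviside_le_one (y : ℝ) : |Heaviside y| ≤ 1 := by
  unfold Heaviside; split <;> norm_num

lemma sum_Icc_heaviside_sub_intCast (x : ℝ) {n : ℕ} (h₁ : -(n : ℤ) ≤ ⌊x⌋) (h₂ : ⌊x⌋ ≤ n) :
    ∑ i ∈ Icc (-(n : ℤ)) n, Heaviside (x - i) = ⌊x⌋ + n + 1 := by
  have hfilter : {i ∈ Icc (-(n : ℤ)) n | i ≤ ⌊x⌋} = Icc (-(n : ℤ)) ⌊x⌋ := by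
    ext i; simp only [mem_filter, mem_Icc]; omega
  simp only [Heaviside, sub_nonneg, ← Int.le_floor]
  rw [sum_boole, hfilter, Int.card_Icc, ← Int.cast_natCast, Int.toNat_of_nonneg (by omega)]
  push_cast
  ring

lemma abs_comp_div_sub_mul_div_le {f : ℝ → ℝ} {a c B : ℝ} (ha : 0 < a) (ha₂ : a ≤ 1 / 2)
    (hf : ∀ y, 1 ≤ |y| → |f y - c / y| ≤ B / y ^ 2) {z : ℝ} (hz : 1 / 2 ≤ |z|) :
    |f (z / a) - c * a / z| ≤ B * a ^ 2 / z ^ 2 := by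
  have h := hf (z / a) (by rw [abs_div, abs_of_pos ha, le_div_iff₀ ha]; linarith)
  rwa [div_div_eq_mul_div, div_pow, div_div_eq_mul_div] at h

lemma sum_Icc_sub_natCast_sub_eq (g : ℝ → ℝ) {a : ℝ} (ha : 0 < a) (x : ℝ) {n : ℕ}
    (hn : ⌊x⌋.natAbs ≤ n) :
    ∑ i ∈ Icc (-(n : ℤ)) n, g ((x - i) / a) - n - x =
      (⌊x⌋ + 1 - x) + ∑ i ∈ Icc (-(n : ℤ)) n, (g ((x - i) / a) - Heaviside ((x - i) / a)) := by
  simp only [sum_sub_distrib, heaviside_div_of_pos ha,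
    sum_Icc_heaviside_sub_intCast x (n := n) (by omega) (by omega)]
  ring

section Ansatz

variable {φ ψ : ℝ → ℝ} {δ : ℝ}

lemma abs_add_mul_sub_heaviside_le {Mφ Mψ : ℝ} (hδ : 0 ≤ δ) (hφ : ∀ y, |φ y| ≤ Mφ)
    (hψ : ∀ y, |ψ y| ≤ Mψ) (y : ℝ) :
    |φ y + δ * ψ y - Heaviside y| ≤ Mφ + δ * Mψ + 1 := by
  have hδψ : |δ * ψ y| ≤ δ * Mψ := by
    rw [abs_mul, abs_of_nonneg hδ]; exact mul_le_mul_of_nonneg_left (hψ y) hδ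
  linarith [abs_sub (φ y + δ * ψ y) (Heaviside y), abs_add_le (φ y) (δ * ψ y), hφ y,
    abs_heaviside_le_one y]

lemma abs_add_mul_sub_heaviside_sub_div_le {κ K₁ K₂ K₃ : ℝ} (hδ : 0 ≤ δ)
    (hφ : ∀ y, 1 ≤ |y| → |φ y - Heaviside y + 1 / (κ * y)| ≤ K₁ / y ^ 2)
    (hψ : ∀ y, 1 ≤ |y| → |ψ y - K₂ / y| ≤ K₃ / y ^ 2) {y : ℝ} (hy : 1 ≤ |y|) :
    |(φ y + δ * ψ y - Heaviside y) - (δ * K₂ - 1 / κ) / y| ≤ (K₁ + δ * K₃) / y ^ 2 := by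
  have hδψ : |δ * (ψ y - K₂ / y)| ≤ δ * (K₃ / y ^ 2) := by
    rw [abs_mul, abs_of_nonneg hδ]; exact mul_le_mul_of_nonneg_left (hψ y hy) hδ
  calc _ = |(φ y - Heaviside y + 1 / (κ * y)) + δ * (ψ y - K₂ / y)| := by congr 1; ring
    _ ≤ K₁ / y ^ 2 + δ * (K₃ / y ^ 2) := (abs_add_le _ _).trans (add_le_add (hφ y hy) hδψ)
    _ = _ := by ring

end Ansatz

theorem hull_function_close_to_identity_general
    (φ ψ : ℝ → ℝ) (α K₁ K₂ K₃ Mφ Mψ p₀ L δ : ℝ)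
    (hφbd : ∀ x : ℝ, |φ x| ≤ Mφ)
    (hφdecay : ∀ x : ℝ, 1 ≤ |x| →
      |φ x - Heaviside x + 1 / (α * Real.pi * x)| ≤ K₁ / x ^ 2)
    (hψbd : ∀ x : ℝ, |ψ x| ≤ Mψ)
    (hψdecay : ∀ x : ℝ, 1 ≤ |x| → |ψ x - K₂ / x| ≤ K₃ / x ^ 2)
    (hp₀ : p₀ ≠ 0) (hδ : δ ∈ Set.Ioc (0:ℝ) (1 / (2 * |p₀|))) :
    ∃ C > 0, ∀ (x l : ℝ),
      Tendsto (fun n : ℕ =>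
          δ * L / α +
          (∑ i ∈ Finset.Icc (-(n:ℤ)) (n:ℤ),
            (φ ((x - i) / (δ * |p₀|)) + δ * ψ ((x - i) / (δ * |p₀|)))) - n)
        atTop (nhds l) →
      |l - x| ≤ C := by
  obtain ⟨hδ₀, hδ₂⟩ := hδ
  set a := δ * |p₀|
  have ha : 0 < a := mul_pos hδ₀ (abs_pos.2 hp₀)
  have ha₂ : a ≤ 1 / 2 := by rw [le_div_iff₀ (by positivity)] at hδ₂; linarith
  have hbd := abs_add_mul_sub_heaviside_le hδ₀.le hφbd hψbd
  have htail := fun z => abs_comp_div_sub_mul_div_le ha ha₂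
    (fun y => abs_add_mul_sub_heaviside_sub_div_le hδ₀.le hφdecay hψdecay) (z := z)
  have hM := (abs_nonneg _).trans (hbd 0)
  have hB := nonneg_of_forall_abs_sub_div_le htail
  refine ⟨|δ * L / α| + 1 + (Mφ + δ * Mψ + 1 + 2 * |(δ * K₂ - 1 / (α * Real.pi)) * a| +
    12 * ((K₁ + δ * K₃) * a ^ 2) + 1), by positivity, fun x l hl => ?_⟩
  refine le_of_tendsto (hl.sub_const x).abs ?_
  filter_upwards [eventually_abs_sum_Icc_le (fun z => hbd (z / a)) htail x,
    eventually_ge_atTop ⌊x⌋.natAbs] with n hsum hn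
  have hfloor : |(⌊x⌋ : ℝ) + 1 - x| ≤ 1 :=
    abs_le.2 ⟨by linarith [Int.lt_floor_add_one x], by linarith [Int.floor_le x]⟩
  have hsplit := sum_Icc_sub_natCast_sub_eq (fun y => φ y + δ * ψ y) ha x hn
  beta_reduce at hsplit
  rw [add_sub_assoc, add_sub_assoc, hsplit]
  refine (abs_add_le _ _).trans ((add_le_add_right (abs_add_le _ _) _).trans ?_)
  linarith

theorem hull_function_close_to_identity
    (φ ψ : ℝ → ℝ) (α K₁ K₂ K₃ Mφ Mψ p₀ L δ : ℝ)
    (hαpos : 0 < α) (hK₁ : 0 < K₁) (hK₃ : 0 < K₃)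
    (hφbd : ∀ x : ℝ, |φ x| ≤ Mφ)
    (hφdecay : ∀ x : ℝ, 1 ≤ |x| →
      |φ x - Heaviside x + 1 / (α * Real.pi * x)| ≤ K₁ / x ^ 2)
    (hψbd : ∀ x : ℝ, |ψ x| ≤ Mψ)
    (hψdecay : ∀ x : ℝ, 1 ≤ |x| → |ψ x - K₂ / x| ≤ K₃ / x ^ 2)
    (hp₀ : p₀ ≠ 0) (hδ : δ ∈ Set.Ioc (0:ℝ) (1 / (2 * |p₀|))) :
    ∃ C > 0, ∀ (x l : ℝ),
      Tendsto (fun n : ℕ =>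
          δ * L / α +
          (∑ i ∈ Finset.Icc (-(n:ℤ)) (n:ℤ),
            (φ ((x - i) / (δ * |p₀|)) + δ * ψ ((x - i) / (δ * |p₀|)))) - n)
        atTop (nhds l) →
      |l - x| ≤ C :=
  hull_function_close_to_identity_general φ ψ α K₁ K₂ K₃ Mφ Mψ p₀ L δ hφbd hφdecay hψbd hψdecay hp₀
    hδ
end

section
/- Let f : ℝ → ℝ be bounded with |f(z) - K₂/z| ≤ K₃/z² for |z| ≥ 1. Fix x ∈ ℝ with nearest integer i₀, and δ ∈ (0, 1/2]. Then |lim_{n→∞} ∑_{i=-n, i≠i₀}^{n} f((x-i)/δ)| ≤ C·δ for a constant C independent of x (depending on K₂, K₃, and δ only through the factor δ). -/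
open Filter Finset Topology

/-! Write `x = i₀ + γ` and `g k = f ((γ - k) / δ)` for `k ≠ 0`. Since `f z = K₂ / z + O(1 / z²)`,
pairing `k` with `-k` cancels the first-order terms up to `K₂ δ · 2γ / (γ² - k²) = O(δ / k²)`, while
the second-order terms are `O(δ² / k²)`; so the symmetric partial sums `∑_{0 < |k| ≤ n} g k` are
`O(δ)` uniformly in `n` and `γ`. The sums in the statement are these symmetric sums shifted by `i₀`,
which only moves finitely many terms near `±n` in and out, and `g k → 0`, so both have the same
limit. -/

section IntervalSums
variable {M : Type*} [AddCommMonoid M]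

lemma sum_Icc_neg_natCast_succ (g : ℤ → M) (n : ℕ) :
    ∑ k ∈ Icc (-((n + 1 : ℕ) : ℤ)) (n + 1 : ℕ), g k =
      ∑ k ∈ Icc (-(n : ℤ)) n, g k + (g (n + 1) + g (-(n + 1))) := by
  have hIcc : Icc (-((n + 1 : ℕ) : ℤ)) (n + 1 : ℕ) =
      insert ((n : ℤ) + 1) (insert (-((n : ℤ) + 1)) (Icc (-(n : ℤ)) n)) := by
    ext k; simp only [mem_Icc, mem_insert]; omega
  rw [hIcc, sum_insert (by simp; omega), sum_insert (by simp)]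
  abel

lemma sum_Icc_neg_eq_add_sum_range (g : ℤ → M) (n : ℕ) :
    ∑ k ∈ Icc (-(n : ℤ)) n, g k = g 0 + ∑ k ∈ range n, (g (k + 1) + g (-(k + 1))) := by
  induction n with
  | zero => simp
  | succ n ih => rw [sum_Icc_neg_natCast_succ, ih, sum_range_succ, add_assoc]

lemma sum_Icc_neg_sub_comp_add_one {G : Type*} [AddCommGroup G] (g : ℤ → G) (n : ℕ) :
    ∑ k ∈ Icc (-(n : ℤ)) n, (g (k + 1) - g k) = g (n + 1) - g (-n) := by
  induction n with
  | zero => simp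
  | succ n ih =>
    rw [sum_Icc_neg_natCast_succ, ih]; push_cast
    rw [neg_add, neg_add_cancel_right]; abel

lemma sum_erase_comp_sub_eq_sum_update (F : ℤ → M) (s : Finset ℤ) (i₀ : ℤ) :
    ∑ i ∈ s.erase i₀, F (i - i₀) = ∑ i ∈ s, Function.update F 0 0 (i - i₀) := by
  rw [← filter_ne', sum_filter]
  refine sum_congr rfl fun i _ => ?_
  by_cases h : i = i₀ <;> simp [h, sub_eq_zero]

end IntervalSums

lemma sum_range_inv_succ_sq_le_two (n : ℕ) : ∑ k ∈ range n, (((k : ℝ) + 1) ^ 2)⁻¹ ≤ 2 := by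
  have h := sum_Ioo_inv_sq_le (α := ℝ) 0 (n + 1)
  rw [← Ico_add_one_left_eq_Ioo, sum_Ico_eq_sum_range] at h
  simpa [add_comm] using h

lemma abs_sum_Icc_neg_le_of_pair_le {g : ℤ → ℝ} (hg0 : g 0 = 0) {B : ℝ}
    (hB : ∀ k : ℕ, |g (k + 1) + g (-(k + 1))| ≤ B / ((k : ℝ) + 1) ^ 2) (n : ℕ) :
    |∑ k ∈ Icc (-(n : ℤ)) n, g k| ≤ 2 * B := by
  have hB0 : 0 ≤ B := by simpa using (abs_nonneg _).trans (hB 0)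
  rw [sum_Icc_neg_eq_add_sum_range, hg0, zero_add]
  calc |∑ k ∈ range n, (g (k + 1) + g (-(k + 1)))|
      ≤ ∑ k ∈ range n, B * (((k : ℝ) + 1) ^ 2)⁻¹ :=
        (abs_sum_le_sum_abs _ _).trans (sum_le_sum fun k _ => (hB k).trans_eq (div_eq_mul_inv _ _))
    _ = B * ∑ k ∈ range n, (((k : ℝ) + 1) ^ 2)⁻¹ := (mul_sum _ _ _).symm
    _ ≤ B * 2 := by gcongr; exact sum_range_inv_succ_sq_le_two n
    _ = 2 * B := mul_comm _ _

section Shift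
variable {G : Type*} [AddCommGroup G] [TopologicalSpace G] [IsTopologicalAddGroup G]

lemma tendsto_sum_Icc_comp_add_one_sub {g : ℤ → G} (hg : Tendsto g cofinite (𝓝 0)) :
    Tendsto (fun n : ℕ => ∑ k ∈ Icc (-(n : ℤ)) n, g (k + 1) - ∑ k ∈ Icc (-(n : ℤ)) n, g k)
      atTop (𝓝 0) := by
  simp_rw [← sum_sub_distrib, sum_Icc_neg_sub_comp_add_one]
  have hTop : Tendsto (fun n : ℕ => g (n + 1)) atTop (𝓝 0) :=
    (hg.mono_left (Int.cofinite_eq ▸ le_sup_right)).comp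
      (tendsto_atTop_add_const_right _ 1 tendsto_natCast_atTop_atTop)
  have hBot : Tendsto (fun n : ℕ => g (-n)) atTop (𝓝 0) :=
    (hg.mono_left (Int.cofinite_eq ▸ le_sup_left)).comp
      (tendsto_neg_atTop_atBot.comp tendsto_natCast_atTop_atTop)
  simpa using hTop.sub hBot

lemma tendsto_sum_Icc_comp_add_sub {g : ℤ → G} (hg : Tendsto g cofinite (𝓝 0)) (a : ℤ) :
    Tendsto (fun n : ℕ => ∑ k ∈ Icc (-(n : ℤ)) n, g (k + a) - ∑ k ∈ Icc (-(n : ℤ)) n, g k)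
      atTop (𝓝 0) := by
  have hshift : ∀ b : ℤ, Tendsto (fun k => g (k + b)) cofinite (𝓝 0) := fun b =>
    hg.comp (add_left_injective b).tendsto_cofinite
  induction a using Int.induction_on with
  | zero => simpa using tendsto_const_nhds
  | succ i ih =>
    simpa [add_assoc, add_comm (1 : ℤ)] using (tendsto_sum_Icc_comp_add_one_sub (hshift i)).add ih
  | pred i ih =>
    simpa [add_assoc] using ih.sub (tendsto_sum_Icc_comp_add_one_sub (hshift (-i - 1)))

end Shift

def HasInvExpansion (f : ℝ → ℝ) (K₂ K₃ : ℝ) : Prop :=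
  ∀ z : ℝ, 1 ≤ |z| → |f z - K₂ / z| ≤ K₃ / z ^ 2

namespace HasInvExpansion
variable {f : ℝ → ℝ} {K₂ K₃ : ℝ}

lemma tendsto_cocompact_zero (hf : HasInvExpansion f K₂ K₃) :
    Tendsto f (cocompact ℝ) (𝓝 0) := by
  have hnorm : Tendsto (fun z : ℝ => |z|⁻¹) (cocompact ℝ) (𝓝 0) :=
    tendsto_inv_atTop_zero.comp tendsto_norm_cocompact_atTop
  refine squeeze_zero_norm' (a := fun z => |K₂| * |z|⁻¹ + K₃ * (|z|⁻¹) ^ 2) ?_ ?_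
  · filter_upwards [tendsto_norm_cocompact_atTop.eventually_ge_atTop 1] with z hz
    calc ‖f z‖ ≤ |K₂ / z| + |f z - K₂ / z| := by
          rw [Real.norm_eq_abs]; linarith [abs_sub_abs_le_abs_sub (f z) (K₂ / z)]
      _ ≤ |K₂| * |z|⁻¹ + K₃ * (|z|⁻¹) ^ 2 := by
          rw [abs_div, div_eq_mul_inv, inv_pow, sq_abs, ← div_eq_mul_inv]
          exact add_le_add le_rfl (hf z hz)
  · simpa using (hnorm.const_mul |K₂|).add ((hnorm.pow 2).const_mul K₃)

lemma abs_sub_div_le (hf : HasInvExpansion f K₂ K₃) {δ u : ℝ} (hδ : 0 < δ) (hu : δ ≤ |u|) :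
    |f (u / δ) - K₂ * δ / u| ≤ K₃ * δ ^ 2 / u ^ 2 := by
  have h := hf (u / δ) (by rwa [abs_div, abs_of_pos hδ, one_le_div hδ])
  rwa [div_div_eq_mul_div, div_pow, div_div_eq_mul_div] at h

lemma abs_add_pair_le (hf : HasInvExpansion f K₂ K₃) (hK₃ : 0 ≤ K₃) {δ γ k : ℝ} (hδ : 0 < δ)
    (hδ' : δ ≤ 1 / 2) (hγ : |γ| ≤ 1 / 2) (hk : 1 ≤ k) :
    |f ((γ - k) / δ) + f ((γ + k) / δ)| ≤ 4 * (|K₂| + K₃) * δ / k ^ 2 := by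
  have hminus : k / 2 ≤ |γ - k| := le_abs.mpr (Or.inr (by linarith [(abs_le.mp hγ).2]))
  have hplus : k / 2 ≤ |γ + k| := le_abs.mpr (Or.inl (by linarith [(abs_le.mp hγ).1]))
  have hsecond : ∀ u : ℝ, k / 2 ≤ |u| → |f (u / δ) - K₂ * δ / u| ≤ 2 * K₃ * δ / k ^ 2 := by
    intro u hu
    refine (hf.abs_sub_div_le hδ (by linarith)).trans ?_
    have hu0 : 0 < |u| := by linarith
    rw [← sq_abs u, div_le_div_iff₀ (pow_pos hu0 2) (by positivity)]
    have hku : k ^ 2 ≤ 4 * |u| ^ 2 := by nlinarith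
    nlinarith [mul_le_mul_of_nonneg_left hku (by positivity : 0 ≤ K₃ * δ),
      mul_le_mul_of_nonneg_right hδ' (by positivity : 0 ≤ K₃ * δ * k ^ 2)]
  have hfirst : |K₂ * δ / (γ - k) + K₂ * δ / (γ + k)| ≤ 4 * |K₂| * δ / k ^ 2 := by
    have hm : γ - k ≠ 0 := by intro h; rw [h, abs_zero] at hminus; linarith
    have hp : γ + k ≠ 0 := by intro h; rw [h, abs_zero] at hplus; linarith
    rw [div_add_div _ _ hm hp, abs_div, abs_mul, div_le_div_iff₀ (by positivity) (by positivity)]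
    have h2γ : |2 * γ| ≤ 1 := by rw [abs_mul, abs_two]; linarith
    calc |K₂ * δ * (γ + k) + (γ - k) * (K₂ * δ)| * k ^ 2
        = |K₂| * δ * |2 * γ| * k ^ 2 := by
          rw [show K₂ * δ * (γ + k) + (γ - k) * (K₂ * δ) = K₂ * δ * (2 * γ) by ring,
            abs_mul, abs_mul, abs_of_pos hδ]
      _ ≤ |K₂| * δ * 1 * k ^ 2 := by gcongr
      _ = 4 * |K₂| * δ * (k / 2 * (k / 2)) := by ring
      _ ≤ 4 * |K₂| * δ * (|γ - k| * |γ + k|) := by gcongr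
  calc |f ((γ - k) / δ) + f ((γ + k) / δ)|
      = |(f ((γ - k) / δ) - K₂ * δ / (γ - k)) + (f ((γ + k) / δ) - K₂ * δ / (γ + k))
          + (K₂ * δ / (γ - k) + K₂ * δ / (γ + k))| := by congr 1; ring
    _ ≤ 2 * K₃ * δ / k ^ 2 + 2 * K₃ * δ / k ^ 2 + 4 * |K₂| * δ / k ^ 2 :=
      (abs_add_three _ _ _).trans
        (add_le_add (add_le_add (hsecond _ hminus) (hsecond _ hplus)) hfirst)
    _ = 4 * (|K₂| + K₃) * δ / k ^ 2 := by ring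

lemma tendsto_cofinite_comp_div (hf : HasInvExpansion f K₂ K₃) {δ : ℝ} (hδ : δ ≠ 0) (γ : ℝ) :
    Tendsto (fun k : ℤ => f ((γ - k) / δ)) cofinite (𝓝 0) := by
  have hφ : Tendsto (fun z : ℝ => (γ - z) / δ) (cocompact ℝ) (cocompact ℝ) :=
    ((Homeomorph.subLeft γ).trans (Homeomorph.mulRight₀ δ⁻¹ (inv_ne_zero hδ))).map_cocompact.le
  exact hf.tendsto_cocompact_zero.comp (hφ.comp Int.tendsto_coe_cofinite)

end HasInvExpansion

theorem limit_sum_order_delta_general (f : ℝ → ℝ) (K₂ K₃ : ℝ) (hK₃ : 0 < K₃)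
    (hdecay : ∀ z : ℝ, 1 ≤ |z| → |f z - K₂ / z| ≤ K₃ / z ^ 2) :
    ∃ C > 0, ∀ δ ∈ Set.Ioc (0:ℝ) (1/2), ∀ (x : ℝ) (i₀ : ℤ) (γ : ℝ),
      x = i₀ + γ → γ ∈ Set.Ioc (-(1:ℝ)/2) (1/2) →
      ∀ l : ℝ,
        Tendsto (fun n : ℕ =>
            ∑ i ∈ (Finset.Icc (-(n:ℤ)) (n:ℤ)).erase i₀, f ((x - i) / δ))
          atTop (nhds l) →
        |l| ≤ C * δ := by
  have hf : HasInvExpansion f K₂ K₃ := hdecay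
  refine ⟨8 * (|K₂| + K₃) + 1, by positivity, ?_⟩
  rintro δ ⟨hδ, hδ'⟩ x i₀ γ rfl ⟨hγ, hγ'⟩ l hl
  set g := Function.update (fun k : ℤ => f ((γ - k) / δ)) 0 0 with hg_def
  have hg : Tendsto g cofinite (𝓝 0) :=
    (hf.tendsto_cofinite_comp_div hδ.ne' γ).congr'
      ((eventually_cofinite_ne 0).mono fun k hk => (Function.update_of_ne hk _ _).symm)
  have hpair : ∀ k : ℕ, |g (k + 1) + g (-(k + 1))| ≤ 4 * (|K₂| + K₃) * δ / ((k : ℝ) + 1) ^ 2 := by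
    intro k
    have := hf.abs_add_pair_le hK₃.le hδ hδ' (abs_le.mpr ⟨by linarith, hγ'⟩)
      (k := k + 1) (by linarith [k.cast_nonneg (α := ℝ)])
    rw [hg_def, Function.update_of_ne (by omega), Function.update_of_ne (by omega)]
    push_cast
    rwa [sub_neg_eq_add]
  have hsum : ∀ n : ℕ, ∑ i ∈ (Icc (-(n : ℤ)) n).erase i₀, f ((i₀ + γ - i) / δ) =
      ∑ i ∈ Icc (-(n : ℤ)) n, g (i + -i₀) := fun n => by
    simp only [← sub_eq_add_neg, g, ← sum_erase_comp_sub_eq_sum_update]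
    refine sum_congr rfl fun i _ => ?_
    push_cast; ring_nf
  have hlim : Tendsto (fun n : ℕ => ∑ k ∈ Icc (-(n : ℤ)) n, g k) atTop (𝓝 l) := by
    simpa using (hl.congr hsum).sub (tendsto_sum_Icc_comp_add_sub hg (-i₀))
  calc |l| ≤ 2 * (4 * (|K₂| + K₃) * δ) :=
        le_of_tendsto' hlim.abs (abs_sum_Icc_neg_le_of_pair_le (by simp [g]) hpair)
    _ ≤ (8 * (|K₂| + K₃) + 1) * δ := by nlinarith

theorem limit_sum_order_delta (f : ℝ → ℝ) (K₂ K₃ M : ℝ) (hK₃ : 0 < K₃) (hM : 0 < M)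
    (hbound : ∀ z : ℝ, |f z| ≤ M)
    (hdecay : ∀ z : ℝ, 1 ≤ |z| → |f z - K₂ / z| ≤ K₃ / z ^ 2) :
    ∃ C > 0, ∀ δ ∈ Set.Ioc (0:ℝ) (1/2), ∀ (x : ℝ) (i₀ : ℤ) (γ : ℝ),
      x = i₀ + γ → γ ∈ Set.Ioc (-(1:ℝ)/2) (1/2) →
      ∀ l : ℝ,
        Tendsto (fun n : ℕ =>
            ∑ i ∈ (Finset.Icc (-(n:ℤ)) (n:ℤ)).erase i₀, f ((x - i) / δ))
          atTop (nhds l) →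
        |l| ≤ C * δ :=
  limit_sum_order_delta_general f K₂ K₃ hK₃ hdecay
end
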